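/- Degenerate case of Corollary 1: for ε1, ε2 ∈ [0,1], if (1 − H(ε1))/2 ≥ 1 − H(ε2), then max over P ∈ [0,1] of min{ (1 − H(ε1))·(1 − P), H(ε2·(1 − 2P) + P) − H(ε2) } = 1 − H(ε2), i.e., the capacity of the two-hop half-duplex relay channel with binary-symmetric links equals the capacity of the relay-destination binary-symmetric channel. -/

import Mathlib

/-!
At `P = 1/2` the relay–destination channel output is uniform, so the second term equals
`1 - H(ε2)`, and the hypothesis makes the first term `(1 - H(ε1))/2` at least as large.
No `P` does better, since `H ≤ 1` bounds the second term by `1 - H(ε2)`.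
-/

/-- The binary entropy function (in bits), with the convention `0·log2 0 = 0`. -/
noncomputable def binH (p : ℝ) : ℝ :=
  -(p * Real.logb 2 p) - (1 - p) * Real.logb 2 (1 - p)

lemma binH_eq_binEntropy_div_log_two (p : ℝ) : binH p = Real.binEntropy p / Real.log 2 := by
  unfold binH Real.binEntropy Real.logb
  rw [Real.log_inv, Real.log_inv]
  ring

lemma binH_le_one (p : ℝ) : binH p ≤ 1 := by
  rw [binH_eq_binEntropy_div_log_two, div_le_one (Real.log_pos one_lt_two)]
  exact Real.binEntropy_le_log_two

lemma binH_two_inv : binH 2⁻¹ = 1 := by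
  rw [binH_eq_binEntropy_div_log_two, Real.binEntropy_two_inv,
    div_self (Real.log_pos one_lt_two).ne']

theorem capacity_BSC_degenerate_case_general (ε1 ε2 : ℝ)
    (hdeg : 1 - binH ε2 ≤ (1 - binH ε1) / 2) :
    IsGreatest {r : ℝ | ∃ P ∈ Set.Icc (0:ℝ) 1,
        r = min ((1 - binH ε1) * (1 - P)) (binH (ε2 * (1 - 2 * P) + P) - binH ε2)}
      (1 - binH ε2) := by
  constructor
  · refine ⟨2⁻¹, by norm_num, ?_⟩
    have h_uniform : ε2 * (1 - 2 * 2⁻¹) + 2⁻¹ = (2⁻¹ : ℝ) := by ring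
    rw [h_uniform, binH_two_inv, min_eq_right (by linarith)]
  · rintro r ⟨P, -, rfl⟩
    calc min ((1 - binH ε1) * (1 - P)) (binH (ε2 * (1 - 2 * P) + P) - binH ε2)
        ≤ binH (ε2 * (1 - 2 * P) + P) - binH ε2 := min_le_right _ _
      _ ≤ 1 - binH ε2 := by linarith [binH_le_one (ε2 * (1 - 2 * P) + P)]

/-- degenerate case of Corollary 1: for `ε1, ε2 ∈ [0,1]`, if
`(1 − H(ε1))/2 ≥ 1 − H(ε2)`, then
`max_{P ∈ [0,1]} min{ (1 − H(ε1))·(1 − P), H(ε2·(1 − 2P) + P) − H(ε2) } = 1 − H(ε2)`,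
i.e., the capacity of the two-hop half-duplex relay channel with binary-symmetric links
equals the capacity of the relay-destination binary-symmetric channel. -/
theorem capacity_BSC_degenerate_case (ε1 ε2 : ℝ)
    (hε1 : ε1 ∈ Set.Icc (0:ℝ) 1) (hε2 : ε2 ∈ Set.Icc (0:ℝ) 1)
    (hdeg : 1 - binH ε2 ≤ (1 - binH ε1) / 2) :
    IsGreatest {r : ℝ | ∃ P ∈ Set.Icc (0:ℝ) 1,
        r = min ((1 - binH ε1) * (1 - P)) (binH (ε2 * (1 - 2 * P) + P) - binH ε2)}
      (1 - binH ε2) :=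
  capacity_BSC_degenerate_case_general ε1 ε2 hdeg
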